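/- For every nonzero real z with |z| < π, coth z = 1/z + Σ_{n≥1} (2^{2n} B_{2n} / (2n)!) · z^{2n-1}, where B_{2n} are the Bernoulli numbers and the series converges. -/

import Mathlib

open Real PowerSeries Finset
open scoped Nat

/-!
The numbers `bernoulli k / k!` are the Taylor coefficients of `w / (exp w - 1)`, and
`|bernoulli (2m)| / (2m)! = 2 ζ(2m) / (2π)^(2m) ≤ 4 / (2π)^(2m)`, so the Bernoulli series
converges absolutely for `|w| < 2π`; its Cauchy product with the series of `exp w - 1` is then
`w`, by the formal identity `bernoulliPowerSeries * (exp - 1) = X`. At `w = 2z` the odd terms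
beyond the first vanish, and `2z / (exp (2z) - 1) + z = z coth z`.
-/

theorem PowerSeries.hasSum_coeff_mul_mul_pow_of_summable_norm {R : Type*} [NormedCommRing R]
    [CompleteSpace R] {P Q : R⟦X⟧} {w : R} (hP : Summable fun k => ‖coeff k P * w ^ k‖)
    (hQ : Summable fun k => ‖coeff k Q * w ^ k‖) :
    HasSum (fun n => coeff n (P * Q) * w ^ n)
      ((∑' k, coeff k P * w ^ k) * ∑' k, coeff k Q * w ^ k) := by
  have hterm (n : ℕ) :
      ∑ kl ∈ antidiagonal n, coeff kl.1 P * w ^ kl.1 * (coeff kl.2 Q * w ^ kl.2) =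
        coeff n (P * Q) * w ^ n := by
    rw [coeff_mul, sum_mul]
    refine sum_congr rfl fun kl hkl => ?_
    rw [← mem_antidiagonal.1 hkl, pow_add]
    ring
  have := (summable_norm_sum_mul_antidiagonal_of_summable_norm hP hQ).of_norm.hasSum
  rwa [← tsum_mul_tsum_eq_tsum_sum_antidiagonal_of_summable_norm hP hQ, funext hterm] at this

theorem abs_bernoulli_two_mul_div_factorial_eq {k : ℕ} (hk : k ≠ 0) :
    |(bernoulli (2 * k) : ℝ) / (2 * k)!| =
      2 * (∑' n : ℕ, 1 / (n : ℝ) ^ (2 * k)) / (2 * π) ^ (2 * k) := by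
  have hzeta := hasSum_zeta_nat hk
  have hnonneg : 0 ≤ ∑' n : ℕ, 1 / (n : ℝ) ^ (2 * k) := tsum_nonneg fun n => by positivity
  have hpow : (2 : ℝ) ^ (2 * k) = 2 * 2 ^ (2 * k - 1) := by
    rw [← pow_succ']; congr 1; omega
  rw [← abs_of_nonneg hnonneg, hzeta.tsum_eq, mul_pow, hpow]
  simp only [abs_div, abs_mul, abs_pow, abs_neg, abs_one, one_pow, one_mul, abs_two,
    abs_of_pos pi_pos, Nat.abs_cast]
  field_simp

theorem tsum_one_div_nat_pow_two_mul_le {k : ℕ} (hk : k ≠ 0) :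
    ∑' n : ℕ, 1 / (n : ℝ) ^ (2 * k) ≤ π ^ 2 / 6 := by
  rw [← hasSum_zeta_two.tsum_eq]
  refine (hasSum_zeta_nat hk).summable.tsum_le_tsum (fun n => ?_) hasSum_zeta_two.summable
  rcases n.eq_zero_or_pos with rfl | hn
  · simp [hk]
  · gcongr
    · exact_mod_cast hn
    · omega

theorem abs_bernoulli_div_factorial_le (k : ℕ) :
    |(bernoulli k : ℝ) / k !| ≤ 4 / (2 * π) ^ k := by
  obtain ⟨m, rfl | rfl⟩ := k.even_or_odd'
  · rcases eq_or_ne m 0 with rfl | hm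
    · norm_num
    · rw [abs_bernoulli_two_mul_div_factorial_eq hm]
      have hzeta := tsum_one_div_nat_pow_two_mul_le hm
      have hpi : π ^ 2 < 12 := by nlinarith [pi_lt_d2, pi_pos]
      gcongr
      linarith
  · rcases eq_or_ne m 0 with rfl | hm
    · rw [le_div_iff₀ (by positivity)]
      norm_num [bernoulli_one]
      linarith [pi_lt_four]
    · rw [bernoulli_eq_zero_of_odd (odd_two_mul_add_one m) (by omega)]
      simp only [Rat.cast_zero, zero_div, abs_zero]
      positivity

theorem summable_norm_bernoulli_div_factorial_mul_pow {w : ℝ} (hw : |w| < 2 * π) :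
    Summable fun k => ‖(bernoulli k : ℝ) / k ! * w ^ k‖ := by
  have hq : |w| / (2 * π) < 1 := (div_lt_one (by positivity)).2 hw
  refine ((summable_geometric_of_lt_one (by positivity) hq).mul_left 4).of_nonneg_of_le
    (fun k => norm_nonneg _) fun k => ?_
  rw [norm_mul, norm_pow, norm_eq_abs, norm_eq_abs, div_pow, ← mul_div_assoc, mul_div_right_comm]
  gcongr
  exact abs_bernoulli_div_factorial_le k

theorem hasSum_bernoulli_div_factorial_mul_pow {w : ℝ} (hw0 : w ≠ 0) (hw : |w| < 2 * π) :
    HasSum (fun k => (bernoulli k : ℝ) / k ! * w ^ k) (w / (exp w - 1)) := by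
  have hB (k : ℕ) : coeff k (bernoulliPowerSeries ℝ) = bernoulli k / k ! := by
    simp [bernoulliPowerSeries]
  have hE (k : ℕ) : coeff k (PowerSeries.exp ℝ - 1) * w ^ k =
      w ^ k / (k ! : ℝ) - if k = 0 then 1 else 0 := by
    rcases eq_or_ne k 0 with rfl | hk
    · simp
    · simp [hk, coeff_one, div_eq_inv_mul]
  have hexp : HasSum (fun k => coeff k (PowerSeries.exp ℝ - 1) * w ^ k) (exp w - 1) := by
    simpa only [hE, exp_eq_exp_ℝ] using
      (NormedSpace.expSeries_div_hasSum_exp w).sub (hasSum_ite_eq 0 (1 : ℝ))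
  have hexp_norm : Summable fun k => ‖coeff k (PowerSeries.exp ℝ - 1) * w ^ k‖ := by
    refine (summable_pow_div_factorial |w|).of_nonneg_of_le (fun k => norm_nonneg _) fun k => ?_
    rw [hE]
    split_ifs with hk <;> simp [hk]
  have hprod := hasSum_coeff_mul_mul_pow_of_summable_norm (P := bernoulliPowerSeries ℝ)
    (Q := PowerSeries.exp ℝ - 1) (w := w)
    (by simpa only [hB] using summable_norm_bernoulli_div_factorial_mul_pow hw) hexp_norm
  rw [bernoulliPowerSeries_mul_exp_sub_one, hexp.tsum_eq] at hprod
  have hX : HasSum (fun n => coeff n (X : ℝ⟦X⟧) * w ^ n) w := by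
    convert hasSum_ite_eq 1 w using 2 with n
    rcases eq_or_ne n 1 with rfl | hn <;> simp [coeff_X, *]
  have hsub : exp w - 1 ≠ 0 := sub_ne_zero.2 (mt (exp_eq_one_iff w).1 hw0)
  simp only [hB] at hprod
  rw [← (eq_div_iff hsub).2 (hprod.unique hX)]
  exact (summable_norm_bernoulli_div_factorial_mul_pow hw).of_norm.hasSum

theorem HasSum.comp_two_mul_of_odd_eq_zero {M : Type*} [AddCommMonoid M] [TopologicalSpace M]
    {f : ℕ → M} {a : M} (hf : HasSum f a) (hodd : ∀ n, f (2 * n + 1) = 0) :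
    HasSum (fun n => f (2 * n)) a := by
  refine (Function.Injective.hasSum_iff (mul_right_injective₀ two_ne_zero) fun k hk => ?_).2 hf
  obtain ⟨n, rfl | rfl⟩ := k.even_or_odd'
  · exact absurd ⟨n, rfl⟩ hk
  · exact hodd n

theorem cosh_div_sinh_eq_two_div_exp_two_mul_sub_one_add_one {z : ℝ} (hz : z ≠ 0) :
    cosh z / sinh z = 2 / (exp (2 * z) - 1) + 1 := by
  have hsinh : sinh z ≠ 0 := sinh_ne_zero.2 hz
  have hcs : cosh z + sinh z ≠ 0 := by
    rw [cosh_add_sinh]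
    exact (exp_pos z).ne'
  have hsub : exp (2 * z) - 1 = 2 * sinh z * (cosh z + sinh z) := by
    rw [two_mul, exp_add, ← cosh_add_sinh]
    linear_combination cosh_sq z
  rw [hsub]
  field_simp
  linear_combination cosh_sq z

theorem coth_expansion (z : ℝ) (hz : z ≠ 0) (hz2 : |z| < Real.pi) :
    HasSum (fun n : ℕ =>
        (2 : ℝ) ^ (2 * (n + 1)) * (bernoulli (2 * (n + 1)) : ℝ) /
          (Nat.factorial (2 * (n + 1))) * z ^ (2 * (n + 1) - 1))
      (Real.cosh z / Real.sinh z - 1 / z) := by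
  set f : ℕ → ℝ := fun k => (bernoulli k : ℝ) / k ! * (2 * z) ^ k
  have hf : HasSum f (2 * z / (exp (2 * z) - 1)) :=
    hasSum_bernoulli_div_factorial_mul_pow (by positivity) (by rw [abs_mul, abs_two]; linarith)
  have htail : HasSum (fun k => f (k + 2)) (2 * z / (exp (2 * z) - 1) - (1 - z)) := by
    have hhead : ∑ k ∈ range 2, f k = 1 - z := by
      norm_num [f, sum_range_succ, bernoulli_one]
      ring
    exact hhead ▸ (hasSum_nat_add_iff' 2).2 hf
  have heven : HasSum (fun n => f (2 * n + 2)) (2 * z / (exp (2 * z) - 1) - (1 - z)) :=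
    htail.comp_two_mul_of_odd_eq_zero fun n => by
      have hodd : Odd (2 * n + 1 + 2) := ⟨n + 1, by ring⟩
      simp [f, bernoulli_eq_zero_of_odd hodd (by omega)]
  have hvalue : (2 * z / (exp (2 * z) - 1) - (1 - z)) / z = cosh z / sinh z - 1 / z := by
    rw [cosh_div_sinh_eq_two_div_exp_two_mul_sub_one_add_one hz]
    field_simp
    ring
  refine hvalue ▸ (heven.div_const z).congr_fun fun n => ?_
  simp only [f]
  rw [show 2 * (n + 1) - 1 = 2 * n + 1 by omega, show 2 * n + 2 = 2 * (n + 1) by ring, mul_pow]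
  field_simp
  ring
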